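/- For n ≥ 2, G_1(n) = (2n-1)·G_1(n-1) + G_1(n-2), with G_1(0) = 1 and G_1(1) = 2. -/

import Mathlib

/-- `G₁ n = Σ_{i=0}^{n} (n+i)!/((n-i)!·i!·2^i)`. -/
def G1 (n : ℕ) : ℚ :=
  ∑ i ∈ Finset.range (n + 1),
    (Nat.factorial (n + i) : ℚ) /
      ((Nat.factorial (n - i) : ℚ) * (Nat.factorial i : ℚ) * 2 ^ i)

/-!
The `i`-th summand of `G₁ n` equals `C(n+i, 2i) · (2i-1)‼`: choose the `2i` elements lying in
blocks of size two among the `n + i` elements, then pair them up. In this form the summands vanish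
for `i > n`, so sums may be taken over any long enough range, and the recurrence holds summand by
summand, `T(m+2, j+1) = (2m+3) T(m+1, j) + T(m, j+1)`, which is Pascal's rule applied twice.
-/

open Nat Finset

namespace G1

/-- `(2 * i - 1)‼` is the number of perfect matchings of `2 * i` points; at `i = 0` the truncated
subtraction gives `0‼ = 1`, as it should. -/
def pairingTerm (n i : ℕ) : ℕ :=
  (n + i).choose (2 * i) * (2 * i - 1)‼

def pairingCount (n : ℕ) : ℕ :=
  ∑ i ∈ range (n + 1), pairingTerm n i

theorem factorial_two_mul (i : ℕ) : (2 * i)! = 2 ^ i * i ! * (2 * i - 1)‼ := by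
  cases i with
  | zero => rfl
  | succ k =>
    rw [show 2 * (k + 1) = 2 * k + 1 + 1 by ring, factorial_eq_mul_doubleFactorial,
      show 2 * k + 1 + 1 = 2 * (k + 1) by ring, doubleFactorial_two_mul]
    rfl

theorem cast_pairingTerm {n i : ℕ} (h : i ≤ n) :
    (pairingTerm n i : ℚ) = (n + i)! / ((n - i)! * i ! * 2 ^ i) := by
  have hfact : ((2 * i)! : ℚ) = 2 ^ i * i ! * (2 * i - 1)‼ := by exact_mod_cast factorial_two_mul i
  rw [pairingTerm, cast_mul, cast_choose ℚ (by omega), show n + i - 2 * i = n - i by omega]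
  field_simp
  rw [hfact]
  ring

theorem pairingTerm_eq_zero {n i : ℕ} (h : n < i) : pairingTerm n i = 0 := by
  rw [pairingTerm, choose_eq_zero_of_lt (by omega), zero_mul]

theorem pairingTerm_zero_right (n : ℕ) : pairingTerm n 0 = 1 := by
  simp [pairingTerm]

theorem pairingCount_eq_sum_range {n k : ℕ} (h : n < k) :
    pairingCount n = ∑ i ∈ range k, pairingTerm n i := by
  refine sum_subset (range_subset_range.2 h) fun i _ hi => pairingTerm_eq_zero ?_
  simpa using hi

theorem eq_pairingCount (n : ℕ) : G1 n = pairingCount n := by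
  rw [G1, pairingCount, cast_sum]
  refine sum_congr rfl fun i hi => (cast_pairingTerm ?_).symm
  simpa [Nat.lt_succ_iff] using hi

theorem choose_recurrence (m j : ℕ) :
    (2 * j + 1) * (m + j + 3).choose (2 * j + 2) =
      (2 * m + 3) * (m + j + 1).choose (2 * j) + (2 * j + 1) * (m + j + 1).choose (2 * j + 2) := by
  set N := m + j + 1
  have hpascal : (N + 2).choose (2 * j + 2) =
      N.choose (2 * j) + 2 * N.choose (2 * j + 1) + N.choose (2 * j + 2) := by
    simp only [choose_succ_succ]
    ring
  have hstep : N.choose (2 * j + 1) * (2 * j + 1) = N.choose (2 * j) * (N - 2 * j) :=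
    choose_succ_right_eq N (2 * j)
  have hlow : N.choose (2 * j) * (2 * (N - 2 * j) + (2 * j + 1)) = N.choose (2 * j) * (2 * m + 3) := by
    rcases le_or_gt (2 * j) N with hle | hlt
    · congr 1
      omega
    · rw [choose_eq_zero_of_lt hlt, zero_mul, zero_mul]
  rw [show m + j + 3 = N + 2 by omega, hpascal]
  nlinarith [hstep, hlow]

theorem pairingTerm_recurrence (m j : ℕ) :
    pairingTerm (m + 2) (j + 1) = (2 * m + 3) * pairingTerm (m + 1) j + pairingTerm m (j + 1) := by
  have hodd : (2 * j + 2 - 1)‼ = (2 * j + 1) * (2 * j - 1)‼ := by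
    rw [show 2 * j + 2 - 1 = 2 * j + 1 by omega, doubleFactorial_add_one]
  simp only [pairingTerm, show m + 2 + (j + 1) = m + j + 3 by ring,
    show m + 1 + j = m + j + 1 by ring, show m + (j + 1) = m + j + 1 by ring,
    show 2 * (j + 1) = 2 * j + 2 by ring, hodd]
  linear_combination (2 * j - 1)‼ * choose_recurrence m j

theorem pairingCount_recurrence (m : ℕ) :
    pairingCount (m + 2) = (2 * m + 3) * pairingCount (m + 1) + pairingCount m := by
  rw [pairingCount_eq_sum_range (k := m + 3) (by omega), pairingCount,
    pairingCount_eq_sum_range (k := m + 3) (by omega), sum_range_succ' _ (m + 2),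
    sum_range_succ' (pairingTerm m) (m + 2)]
  simp only [pairingTerm_recurrence, sum_add_distrib, ← mul_sum, pairingTerm_zero_right]
  ring

end G1

theorem stmt_9 :
    G1 0 = 1 ∧ G1 1 = 2 ∧
      ∀ n : ℕ, 2 ≤ n → G1 n = (2 * n - 1) * G1 (n - 1) + G1 (n - 2) := by
  simp only [G1.eq_pairingCount]
  refine ⟨rfl, rfl, fun n hn => ?_⟩
  obtain ⟨m, rfl⟩ : ∃ m, n = m + 2 := ⟨n - 2, by omega⟩
  rw [G1.pairingCount_recurrence]
  push_cast
  ring
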